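/- Let T > 0. Let φ : (0,∞) → ℝ be a locally integrable function such that liminf_{t→∞} ∫_t^{t+T} φ(τ) dτ > 0 and limsup_{t→∞} ∫_t^{t+T} φ⁻(τ) dτ < ∞, where φ⁻ = max{−φ, 0}. Let ψ : (0,∞) → ℝ be a measurable function with ψ(t) → 0 as t → ∞. Suppose ξ : (0,∞) → [0,∞) is a nonnegative, locally absolutely continuous function satisfying dξ/dt + φ ξ ≤ ψ almost everywhere on (0,∞). Then ξ(t) → 0 as t → ∞. -/

import Mathlib

/-!
With `F t = ∫ s in a..t, φ s`, the integrating factor `exp F` turns `ξ' + φ ξ ≤ ψ` into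
`(ξ * exp F)' ≤ ψ * exp F`, which can be integrated because `ξ` and `exp F` are absolutely
continuous. Far out, every window `[a, a + T]` has `∫ φ ≥ γ > 0`, `∫ φ⁻ ≤ M` and `|ψ| ≤ ε`, so
`ξ (a + T) ≤ exp (-γ) * ξ a + O(ε)` and `ξ ≤ exp M * ξ a + O(ε)` on the window. Iterating the
contraction over consecutive windows shows that `ξ` is eventually `O(ε)`.
-/

open Filter MeasureTheory Set Real Topology

section

variable {Y : Type*} [PseudoMetricSpace Y] {a b : ℝ}

theorem LipschitzOnWith.comp_absolutelyContinuousOnInterval {X : Type*} [PseudoMetricSpace X]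
    {f : ℝ → X} {g : X → Y} {K : NNReal}
    {s : Set X} (hg : LipschitzOnWith K g s) (hf : AbsolutelyContinuousOnInterval f a b)
    (hfs : MapsTo f (uIcc a b) s) : AbsolutelyContinuousOnInterval (g ∘ f) a b := by
  refine squeeze_zero' (Eventually.of_forall fun _ ↦ Finset.sum_nonneg fun _ _ ↦ dist_nonneg)
    ?_ (by simpa using Tendsto.const_mul (K : ℝ) hf)
  rw [eventually_inf_principal]
  filter_upwards with E hE
  rw [Finset.mul_sum]
  gcongr with i hi
  exact hg.dist_le_mul _ (hfs (hE.1 i hi).1) _ (hfs (hE.1 i hi).2)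

theorem LocallyLipschitz.comp_absolutelyContinuousOnInterval {F : Type*}
    [SeminormedAddCommGroup F] {f : ℝ → F} {g : F → Y}
    (hg : LocallyLipschitz g) (hf : AbsolutelyContinuousOnInterval f a b) :
    AbsolutelyContinuousOnInterval (g ∘ f) a b := by
  obtain ⟨K, hK⟩ := hg.locallyLipschitzOn.exists_lipschitzOnWith_of_compact
    (isCompact_uIcc.image_of_continuousOn hf.continuousOn)
  exact hK.comp_absolutelyContinuousOnInterval hf (mapsTo_image f _)

end

theorem integral_add_mul_mul_exp_integral_eq_sub {φ ξ ξ' : ℝ → ℝ} {a b : ℝ} (hab : a ≤ b)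
    (hφ : IntervalIntegrable φ volume a b) (hξ' : IntervalIntegrable ξ' volume a b)
    (hξ : ∀ x ∈ Icc a b, ξ x - ξ a = ∫ t in a..x, ξ' t) :
    ∫ t in a..b, (ξ' t + φ t * ξ t) * exp (∫ s in a..t, φ s) =
      ξ b * exp (∫ s in a..b, φ s) - ξ a := by
  set F : ℝ → ℝ := fun x ↦ ∫ s in a..x, φ s
  -- `ξ` itself is only controlled on `[a, b]`; `η` is its absolutely continuous extension.
  set η : ℝ → ℝ := fun x ↦ ξ a + ∫ t in a..x, ξ' t
  have hηξ : ∀ x ∈ Icc a b, η x = ξ x := fun x hx ↦ by simp only [η, ← hξ x hx]; ring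
  have ha : a ∈ uIcc a b := left_mem_uIcc
  have hη : AbsolutelyContinuousOnInterval η a b :=
    (LipschitzWith.const (ξ a)).lipschitzOnWith.absolutelyContinuousOnInterval.add
      (hξ'.absolutelyContinuousOnInterval_intervalIntegral ha)
  have hE : AbsolutelyContinuousOnInterval (exp ∘ F) a b :=
    contDiff_exp.locallyLipschitz.comp_absolutelyContinuousOnInterval
      (hφ.absolutelyContinuousOnInterval_intervalIntegral ha)
  have key := hη.integral_deriv_mul_eq_sub hE
  rw [hηξ a ⟨le_rfl, hab⟩, hηξ b ⟨hab, le_rfl⟩] at key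
  simp only [Function.comp_apply, F, intervalIntegral.integral_same, exp_zero, mul_one] at key
  rw [← key]
  refine intervalIntegral.integral_congr_ae ?_
  filter_upwards [hξ'.ae_hasDerivAt_integral, hφ.ae_hasDerivAt_integral] with x hξx hφx hx
  have hx' : x ∈ Icc a b := Ioc_subset_Icc_self (uIoc_of_le hab ▸ hx)
  have hxu : x ∈ uIcc a b := uIoc_subset_uIcc hx
  rw [((hξx hxu a ha).const_add (ξ a)).deriv, ((hasDerivAt_exp _).comp x (hφx hxu a ha)).deriv,
    hηξ x hx']
  ring

theorem le_mul_exp_neg_integral_add_of_deriv_add_mul_le {φ ψ ξ ξ' : ℝ → ℝ} {a b ε P : ℝ}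
    (hab : a ≤ b) (hφ : IntervalIntegrable φ volume a b) (hξ' : IntervalIntegrable ξ' volume a b)
    (hξ : ∀ x ∈ Icc a b, ξ x - ξ a = ∫ t in a..x, ξ' t)
    (hψm : AEStronglyMeasurable ψ volume) (hψ : ∀ t ∈ Icc a b, |ψ t| ≤ ε)
    (hφP : ∀ t ∈ Icc a b, -P ≤ ∫ s in t..b, φ s)
    (hineq : ∀ᵐ t, t ∈ Icc a b → ξ' t + φ t * ξ t ≤ ψ t) :
    ξ b ≤ ξ a * exp (-∫ s in a..b, φ s) + ε * (b - a) * exp P := by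
  set F : ℝ → ℝ := fun x ↦ ∫ s in a..x, φ s
  have hicc : uIcc a b = Icc a b := uIcc_of_le hab
  have hE : ContinuousOn (fun t ↦ exp (F t)) (uIcc a b) :=
    continuous_exp.comp_continuousOn
      (intervalIntegral.continuousOn_primitive_interval' hφ left_mem_uIcc)
  have hξc : ContinuousOn ξ (uIcc a b) := by
    refine (continuousOn_const (c := ξ a)).add
      (intervalIntegral.continuousOn_primitive_interval' hξ' left_mem_uIcc) |>.congr fun x hx ↦ ?_
    simp only [Pi.add_apply, ← hξ x (hicc ▸ hx)]; ring
  have hψi : IntervalIntegrable ψ volume a b := by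
    refine intervalIntegrable_const.mono_fun' (g := fun _ ↦ ε) hψm.restrict
      (ae_restrict_of_forall_mem measurableSet_uIoc fun t ht ↦ hψ t ?_)
    exact Ioc_subset_Icc_self (uIoc_of_le hab ▸ ht)
  have hFb : ∀ t ∈ Icc a b, F t ≤ F b + P := fun t ht ↦ by
    have ht' : t ∈ uIcc a b := hicc ▸ ht
    have := intervalIntegral.integral_add_adjacent_intervals
      (hφ.mono_set (uIcc_subset_uIcc left_mem_uIcc ht'))
      (hφ.mono_set (uIcc_subset_uIcc ht' right_mem_uIcc))
    linarith [hφP t ht]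
  have hε : 0 ≤ ε := (abs_nonneg _).trans (hψ a ⟨le_rfl, hab⟩)
  have key : ξ b * exp (F b) - ξ a ≤ ε * (b - a) * exp (F b + P) := calc
    _ = ∫ t in a..b, (ξ' t + φ t * ξ t) * exp (F t) :=
      (integral_add_mul_mul_exp_integral_eq_sub hab hφ hξ' hξ).symm
    _ ≤ ∫ t in a..b, ψ t * exp (F t) := by
      refine intervalIntegral.integral_mono_ae_restrict hab
        ((hξ'.add (hφ.mul_continuousOn hξc)).mul_continuousOn hE) (hψi.mul_continuousOn hE) ?_
      filter_upwards [ae_restrict_of_ae hineq, ae_restrict_mem measurableSet_Icc] with t h ht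
      exact mul_le_mul_of_nonneg_right (h ht) (exp_pos _).le
    _ ≤ ∫ _ in a..b, ε * exp (F b + P) := by
      refine intervalIntegral.integral_mono_on hab (hψi.mul_continuousOn hE)
        intervalIntegrable_const fun t ht ↦ ?_
      exact mul_le_mul ((le_abs_self _).trans (hψ t ht)) (exp_le_exp.2 (hFb t ht))
        (exp_pos _).le hε
    _ = ε * (b - a) * exp (F b + P) := by rw [intervalIntegral.integral_const, smul_eq_mul]; ring
  have hFb0 := exp_pos (F b)
  rw [exp_add] at key
  rw [exp_neg, ← div_eq_mul_inv, div_add' _ _ _ hFb0.ne', le_div_iff₀ hFb0]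
  linarith

theorem neg_integral_le_integral_max_neg_zero {φ : ℝ → ℝ} {a b t u : ℝ} (hat : a ≤ t)
    (htu : t ≤ u) (hub : u ≤ b) (hφ : IntervalIntegrable φ volume a b) :
    -∫ s in t..u, φ s ≤ ∫ s in a..b, max (-φ s) 0 := by
  have hφn : IntervalIntegrable (fun s ↦ max (-φ s) 0) volume a b :=
    ⟨hφ.1.neg.pos_part, hφ.2.neg.pos_part⟩
  have hsub : uIcc t u ⊆ uIcc a b := by
    rw [uIcc_of_le htu, uIcc_of_le (hat.trans (htu.trans hub))]; exact Icc_subset_Icc hat hub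
  rw [← intervalIntegral.integral_neg]
  calc _ ≤ ∫ s in t..u, max (-φ s) 0 := intervalIntegral.integral_mono_on htu
        (hφ.mono_set hsub).neg (hφn.mono_set hsub) fun _ _ ↦ le_max_left _ _
    _ ≤ _ := intervalIntegral.integral_mono_interval hat htu hub
        (Eventually.of_forall fun _ ↦ le_max_right _ _) hφn

theorem window_bounds_of_deriv_add_mul_le {φ ψ ξ ξ' : ℝ → ℝ} {a L ε M : ℝ} (hL : 0 ≤ L)
    (hφ : IntervalIntegrable φ volume a (a + L)) (hξ' : IntervalIntegrable ξ' volume a (a + L))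
    (hξ : ∀ x ∈ Icc a (a + L), ξ x - ξ a = ∫ t in a..x, ξ' t)
    (hψm : AEStronglyMeasurable ψ volume) (hψ : ∀ t ∈ Icc a (a + L), |ψ t| ≤ ε)
    (hM : ∫ s in a..(a + L), max (-φ s) 0 ≤ M)
    (hineq : ∀ᵐ t, t ∈ Icc a (a + L) → ξ' t + φ t * ξ t ≤ ψ t) (hξa : 0 ≤ ξ a) :
    ξ (a + L) ≤ exp (-∫ s in a..(a + L), φ s) * ξ a + ε * L * exp M ∧
      ∀ t ∈ Icc a (a + L), ξ t ≤ exp M * ξ a + ε * L * exp M := by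
  have hφM : ∀ t u, a ≤ t → t ≤ u → u ≤ a + L → -M ≤ ∫ s in t..u, φ s := fun t u hat htu hu ↦ by
    linarith [neg_integral_le_integral_max_neg_zero hat htu hu hφ]
  have hb (b : ℝ) (hb : b ∈ Icc a (a + L)) :
      ξ b ≤ ξ a * exp (-∫ s in a..b, φ s) + ε * (b - a) * exp M := by
    have hsub : Icc a b ⊆ Icc a (a + L) := Icc_subset_Icc_right hb.2
    have hsub' : uIcc a b ⊆ uIcc a (a + L) := by
      rw [uIcc_of_le hb.1, uIcc_of_le (hb.1.trans hb.2)]; exact hsub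
    refine le_mul_exp_neg_integral_add_of_deriv_add_mul_le hb.1 (hφ.mono_set hsub')
      (hξ'.mono_set hsub') (fun x hx ↦ hξ x (hsub hx)) hψm (fun t ht ↦ hψ t (hsub ht))
      (fun t ht ↦ hφM t b ht.1 ht.2 hb.2) ?_
    filter_upwards [hineq] with t h ht using h (hsub ht)
  have hε : 0 ≤ ε := (abs_nonneg _).trans (hψ a ⟨le_rfl, by linarith⟩)
  refine ⟨by simpa [mul_comm] using hb (a + L) ⟨by linarith, le_rfl⟩, fun t ht ↦ ?_⟩
  calc ξ t ≤ ξ a * exp (-∫ s in a..t, φ s) + ε * (t - a) * exp M := hb t ht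
    _ ≤ exp M * ξ a + ε * L * exp M := by
      have := hφM a t le_rfl ht.1 ht.2
      rw [mul_comm (exp M)]
      gcongr
      · linarith
      · linarith [ht.2]

theorem le_pow_mul_add_div_of_forall_le_mul_add {ξ : ℝ → ℝ} {L q ε N : ℝ} (hL : 0 ≤ L)
    (hq : 0 ≤ q) (hq1 : q < 1) (hε : 0 ≤ ε) (h : ∀ a ≥ N, ξ (a + L) ≤ q * ξ a + ε) (k : ℕ) :
    ξ (N + k * L) ≤ q ^ k * ξ N + ε / (1 - q) := by
  have h1q : 0 < 1 - q := sub_pos.2 hq1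
  induction k with
  | zero => simpa using div_nonneg hε h1q.le
  | succ k ih =>
    have hstep := h (N + k * L) (le_add_of_nonneg_right (by positivity))
    calc ξ (N + (k + 1 : ℕ) * L) = ξ (N + k * L + L) := by push_cast; ring_nf
      _ ≤ q * (q ^ k * ξ N + ε / (1 - q)) + ε := hstep.trans (by gcongr)
      _ = q ^ (k + 1) * ξ N + ε / (1 - q) := by field_simp; ring

theorem tendsto_zero_of_forall_le_mul_add {ξ : ℝ → ℝ} {L q C : ℝ} (hL : 0 < L) (hq : 0 ≤ q)
    (hq1 : q < 1) (hC : 0 ≤ C) (hξ : ∀ᶠ t in atTop, 0 ≤ ξ t)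
    (h : ∀ ε > 0, ∃ N, ∀ a ≥ N,
      ξ (a + L) ≤ q * ξ a + ε ∧ ∀ t ∈ Icc a (a + L), ξ t ≤ C * ξ a + ε) :
    Tendsto ξ atTop (𝓝 0) := by
  refine tendsto_order.2 ⟨fun δ hδ ↦ hξ.mono fun t ht ↦ hδ.trans_le ht, fun δ hδ ↦ ?_⟩
  have h1q : 0 < 1 - q := sub_pos.2 hq1
  set ε := δ / (2 * (C / (1 - q) + 1)) with hε
  have hεpos : 0 < ε := by positivity
  obtain ⟨N, hN⟩ := h ε hεpos
  have hpow : Tendsto (fun k : ℕ ↦ C * (q ^ k * ξ N)) atTop (𝓝 0) := by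
    simpa using ((tendsto_pow_atTop_nhds_zero_of_lt_one hq hq1).mul_const (ξ N)).const_mul C
  obtain ⟨k₀, hk₀⟩ := eventually_atTop.1 (hpow.eventually (gt_mem_nhds (half_pos hδ)))
  have hiter (k : ℕ) := le_pow_mul_add_div_of_forall_le_mul_add hL.le hq hq1 hεpos.le
    (fun a ha ↦ (hN a ha).1) k
  refine eventually_atTop.2 ⟨N + k₀ * L, fun t ht ↦ ?_⟩
  set k := ⌊(t - N) / L⌋₊
  have hk₀k : k₀ ≤ k := Nat.le_floor ((le_div_iff₀ hL).2 (by linarith))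
  have htk : t ∈ Icc (N + k * L) (N + k * L + L) := by
    have hk₀L : 0 ≤ k₀ * L := by positivity
    have h1 := Nat.floor_le (div_nonneg (by linarith : 0 ≤ t - N) hL.le)
    have h2 := Nat.lt_floor_add_one ((t - N) / L)
    rw [le_div_iff₀ hL] at h1
    rw [div_lt_iff₀ hL] at h2
    constructor <;> linarith
  calc ξ t ≤ C * ξ (N + k * L) + ε := (hN _ (le_add_of_nonneg_right (by positivity))).2 t htk
    _ ≤ C * (q ^ k * ξ N + ε / (1 - q)) + ε := by gcongr; exact hiter k
    _ = C * (q ^ k * ξ N) + δ / 2 := by rw [hε]; field_simp; ring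
    _ < δ := by linarith [hk₀ k hk₀k]

theorem MeasureTheory.LocallyIntegrableOn.intervalIntegrable_of_pos {E : Type*}
    [NormedAddCommGroup E] {f : ℝ → E} (hf : LocallyIntegrableOn f (Ioi 0)) {a b : ℝ}
    (ha : 0 < a) (hb : 0 < b) :
    IntervalIntegrable f volume a b :=
  (hf.integrableOn_compact_subset (by simp [uIcc, Icc_subset_Ioi_iff, ha, hb])
    isCompact_uIcc).intervalIntegrable

/-- Generalized Grönwall lemma (Foias–Manley–Temam–Treve).
`ξ` is locally absolutely continuous on `(0,∞)`, encoded by a density `ξ'`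
(locally integrable) satisfying the fundamental theorem of calculus on compact
subintervals of `(0,∞)`. -/
theorem generalized_gronwall
    (T : ℝ) (hT : 0 < T)
    (φ ψ ξ ξ' : ℝ → ℝ)
    (hφ : LocallyIntegrableOn φ (Ioi 0))
    (hliminf : 0 < liminf (fun t => ((∫ τ in t..(t + T), φ τ : ℝ) : EReal)) atTop)
    (hlimsup : limsup (fun t => ((∫ τ in t..(t + T), max (-φ τ) 0 : ℝ) : EReal)) atTop < ⊤)
    (hψmeas : Measurable ψ)
    (hψ : Tendsto ψ atTop (nhds 0))
    (hξ0 : ∀ t ∈ Ioi (0 : ℝ), 0 ≤ ξ t)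
    (hξ' : LocallyIntegrableOn ξ' (Ioi 0))
    (hFTC : ∀ a b : ℝ, 0 < a → a ≤ b → ξ b - ξ a = ∫ t in a..b, ξ' t)
    (hineq : ∀ᵐ t ∂volume, t ∈ Ioi (0 : ℝ) → ξ' t + φ t * ξ t ≤ ψ t) :
    Tendsto ξ atTop (nhds 0) := by
  obtain ⟨γ, hγ0, hγ⟩ := EReal.lt_iff_exists_real_btwn.1 hliminf
  obtain ⟨M, hM, -⟩ := EReal.lt_iff_exists_real_btwn.1 hlimsup
  obtain ⟨t₁, ht₁⟩ := eventually_atTop.1 ((eventually_lt_of_lt_liminf hγ).and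
    (eventually_lt_of_limsup_lt hM) |>.and (eventually_gt_atTop 0))
  refine tendsto_zero_of_forall_le_mul_add (C := exp M) hT (exp_pos _).le
    (exp_lt_one_iff.2 (neg_neg_of_pos (mod_cast hγ0))) (exp_pos _).le
    ((eventually_gt_atTop 0).mono hξ0) fun ε hε ↦ ?_
  have hε' : 0 < ε / (T * exp M) := by positivity
  obtain ⟨N, hN⟩ := eventually_atTop.1 <|
    (by simpa using hψ.abs : Tendsto (|ψ ·|) atTop (𝓝 0)).eventually (ge_mem_nhds hε')
  refine ⟨max N t₁, fun a ha ↦ ?_⟩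
  obtain ⟨⟨hγa, hMa⟩, ha0⟩ := ht₁ a (le_of_max_le_right ha)
  have haT : 0 < a + T := by linarith
  obtain ⟨hstep, hwithin⟩ := window_bounds_of_deriv_add_mul_le hT.le
    (hφ.intervalIntegrable_of_pos ha0 haT) (hξ'.intervalIntegrable_of_pos ha0 haT)
    (fun x hx ↦ hFTC a x ha0 hx.1) hψmeas.aestronglyMeasurable
    (fun t ht ↦ hN t ((le_of_max_le_left ha).trans ht.1)) (mod_cast hMa.le)
    (by filter_upwards [hineq] with t h ht using h (ha0.trans_le ht.1)) (hξ0 a ha0)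
  have hεT : ε / (T * exp M) * T * exp M = ε := by field_simp
  rw [hεT] at hstep hwithin
  refine ⟨hstep.trans ?_, hwithin⟩
  have : γ ≤ ∫ s in a..(a + T), φ s := by exact_mod_cast hγa.le
  gcongr
  exact hξ0 a ha0
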